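/- Let γ = (c_1,…,c_n) be a clan that avoids the seven patterns (1,+,−,1), (1,−,+,1), (1,2,1,2), (1,+,2,2,1), (1,−,2,2,1), (1,2,2,+,1), (1,2,2,−,1). Suppose (i,j) is a pair of γ and there exist two pairs (s,t) and (u,v) of γ with i < s < t < u < v < j (two disjoint pairs both strictly enclosed by (i,j)). Then no entry c_k with i < k < j is a sign: every entry strictly between i and j is a natural number. -/
import Mathlib


/-- An entry of a clan: a plus sign, a minus sign, or a natural number. -/
inductive CEntry : Type where
  | plus : CEntry
  | minus : CEntry
  | num : ℕ → CEntry
deriving DecidableEq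

/-- Whether an entry is a natural number. -/
def CEntry.isNum : CEntry → Bool
  | .num _ => true
  | _ => false

/-- Whether an entry is a sign (`+` or `−`). -/
def CEntry.isSign : CEntry → Bool
  | .num _ => false
  | _ => true

/-- A clan of signature `(p, q)`: a sequence of `n = p + q` symbols, each `+`, `−`, or a
natural number, such that every natural number occurring in the sequence occurs exactly
twice, and the number of `+` entries plus the number of pairs of equal numbers is `p`. -/
structure Clan (n p q : ℕ) : Type where
  c : Fin n → CEntry
  total : n = p + q
  twice : ∀ a : ℕ, (Finset.univ.filter fun i => c i = CEntry.num a).card = 0 ∨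
      (Finset.univ.filter fun i => c i = CEntry.num a).card = 2
  signature : (Finset.univ.filter fun i => c i = CEntry.plus).card
      + (Finset.univ.filter fun i => (c i).isNum = true).card / 2 = p

namespace Clan

variable {n p q : ℕ}

/-- `(i, j)` is a pair of the clan `γ`: `i < j` and `c i = c j` is a natural number. -/
def IsPair (γ : Clan n p q) (i j : Fin n) : Prop :=
  i < j ∧ γ.c i = γ.c j ∧ (γ.c i).isNum = true

instance (γ : Clan n p q) (i j : Fin n) : Decidable (γ.IsPair i j) := by
  unfold IsPair; infer_instance

/-- The finset of all pairs of the clan `γ`. -/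
def pairs (γ : Clan n p q) : Finset (Fin n × Fin n) :=
  Finset.univ.filter fun x => γ.IsPair x.1 x.2

/-- The contribution `j − i − #{pairs (s,t) of γ with s < i < t < j}` of a pair `(i, j)`
to the dimension of the orbit parametrized by `γ`. -/
def summand (γ : Clan n p q) (x : Fin n × Fin n) : ℕ :=
  (x.2 : ℕ) - (x.1 : ℕ) -
    (γ.pairs.filter fun y => y.1 < x.1 ∧ x.1 < y.2 ∧ y.2 < x.2).card

/-- `d_{p,q} = (p(p−1) + q(q−1))/2`, the dimension of the closed orbits. -/
def dpq (p q : ℕ) : ℕ := (p * (p - 1) + q * (q - 1)) / 2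

/-- The dimension of the `GL_p × GL_q`-orbit on the flag variety parametrized by `γ`. -/
def D (γ : Clan n p q) : ℕ := dpq p q + ∑ x ∈ γ.pairs, γ.summand x

/-- `γ` includes the pattern `(1, +, −, 1)`. -/
def Includes1pm1 (γ : Clan n p q) : Prop :=
  ∃ i k l j : Fin n, i < k ∧ k < l ∧ l < j ∧
    γ.c k = CEntry.plus ∧ γ.c l = CEntry.minus ∧ γ.IsPair i j

/-- `γ` includes the pattern `(1, −, +, 1)`. -/
def Includes1mp1 (γ : Clan n p q) : Prop :=
  ∃ i k l j : Fin n, i < k ∧ k < l ∧ l < j ∧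
    γ.c k = CEntry.minus ∧ γ.c l = CEntry.plus ∧ γ.IsPair i j

/-- `γ` includes the pattern `(1, 2, 1, 2)`. -/
def Includes1212 (γ : Clan n p q) : Prop :=
  ∃ i s j t : Fin n, i < s ∧ s < j ∧ j < t ∧
    γ.IsPair i j ∧ γ.IsPair s t ∧ γ.c i ≠ γ.c s

/-- `γ` includes the pattern `(1, +, 2, 2, 1)`. -/
def Includes1p221 (γ : Clan n p q) : Prop :=
  ∃ i k s t j : Fin n, i < k ∧ k < s ∧ s < t ∧ t < j ∧
    γ.c k = CEntry.plus ∧ γ.IsPair i j ∧ γ.IsPair s t ∧ γ.c i ≠ γ.c s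

/-- `γ` includes the pattern `(1, −, 2, 2, 1)`. -/
def Includes1m221 (γ : Clan n p q) : Prop :=
  ∃ i k s t j : Fin n, i < k ∧ k < s ∧ s < t ∧ t < j ∧
    γ.c k = CEntry.minus ∧ γ.IsPair i j ∧ γ.IsPair s t ∧ γ.c i ≠ γ.c s

/-- `γ` includes the pattern `(1, 2, 2, +, 1)`. -/
def Includes122p1 (γ : Clan n p q) : Prop :=
  ∃ i s t k j : Fin n, i < s ∧ s < t ∧ t < k ∧ k < j ∧
    γ.c k = CEntry.plus ∧ γ.IsPair i j ∧ γ.IsPair s t ∧ γ.c i ≠ γ.c s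

/-- `γ` includes the pattern `(1, 2, 2, −, 1)`. -/
def Includes122m1 (γ : Clan n p q) : Prop :=
  ∃ i s t k j : Fin n, i < s ∧ s < t ∧ t < k ∧ k < j ∧
    γ.c k = CEntry.minus ∧ γ.IsPair i j ∧ γ.IsPair s t ∧ γ.c i ≠ γ.c s

/-- `γ` avoids the seven patterns `(1,+,−,1)`, `(1,−,+,1)`, `(1,2,1,2)`, `(1,+,2,2,1)`,
`(1,−,2,2,1)`, `(1,2,2,+,1)`, `(1,2,2,−,1)`. -/
def AvoidsSeven (γ : Clan n p q) : Prop :=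
  ¬ γ.Includes1pm1 ∧ ¬ γ.Includes1mp1 ∧ ¬ γ.Includes1212 ∧
    ¬ γ.Includes1p221 ∧ ¬ γ.Includes1m221 ∧ ¬ γ.Includes122p1 ∧ ¬ γ.Includes122m1

end Clan

/-- The move replacing a pair of opposite signs of `γ` in positions `i < j` by a pair of
equal numbers not occurring in `γ`, yielding `γ'`. -/
def ReplaceMove {n p q : ℕ} (γ γ' : Clan n p q) : Prop :=
  ∃ i j : Fin n, i < j ∧
    ((γ.c i = CEntry.plus ∧ γ.c j = CEntry.minus) ∨
      (γ.c i = CEntry.minus ∧ γ.c j = CEntry.plus)) ∧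
    (∃ a : ℕ, (∀ k, γ.c k ≠ CEntry.num a) ∧
      γ'.c i = CEntry.num a ∧ γ'.c j = CEntry.num a) ∧
    ∀ k, k ≠ i → k ≠ j → γ'.c k = γ.c k

/-- In a clan avoiding the seven patterns, if a pair `(i, j)` strictly
encloses two disjoint pairs, then every entry strictly between `i` and `j` is a
natural number. -/
theorem no_sign_between_pair_enclosing_two {n p q : ℕ} (γ : Clan n p q)
    (h : γ.AvoidsSeven) (i j s t u v : Fin n)
    (hij : γ.IsPair i j) (hst : γ.IsPair s t) (huv : γ.IsPair u v)
    (his : i < s) (htu : t < u) (hvj : v < j) :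
    ∀ k : Fin n, i < k → k < j → (γ.c k).isNum = true := by
  obtain ⟨hijlt, hijeq, hinum⟩ := id hij
  obtain ⟨hstlt, hsteq, hsnum⟩ := id hst
  obtain ⟨huvlt, huveq, hunum⟩ := id huv
  obtain ⟨a, ha⟩ : ∃ a, γ.c i = CEntry.num a := by
    cases hc : γ.c i <;> simp [CEntry.isNum, hc] at hinum ⊢
  -- helper: if x < y, (x,y) a pair, i < x, and c i = c x, contradiction (a occurs ≥ 3 times)
  have key : ∀ x y : Fin n, i < x → x < y → γ.c x = γ.c y → γ.c i ≠ γ.c x := by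
    intro x y hix hxy hxyeq he
    have hx : γ.c x = CEntry.num a := he ▸ ha
    have hy : γ.c y = CEntry.num a := hxyeq ▸ hx
    have hsub : ({i, x, y} : Finset (Fin n)) ⊆
        Finset.univ.filter (fun z => γ.c z = CEntry.num a) := by
      intro z hz
      simp only [Finset.mem_insert, Finset.mem_singleton] at hz
      rcases hz with rfl | rfl | rfl <;> simp [ha, hx, hy]
    have hcard3 : ({i, x, y} : Finset (Fin n)).card = 3 := by
      rw [Finset.card_insert_of_notMem, Finset.card_insert_of_notMem,
        Finset.card_singleton]
      · simp [Fin.ne_of_lt hxy]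
      · simp [Fin.ne_of_lt hix, Fin.ne_of_lt (hix.trans hxy)]
    have := Finset.card_le_card hsub
    rcases γ.twice a with h0 | h2 <;> omega
  have hne_s : γ.c i ≠ γ.c s := key s t his hstlt hsteq
  have hne_u : γ.c i ≠ γ.c u := key u v (his.trans (hstlt.trans htu)) huvlt huveq
  intro k hik hkj
  by_contra hk
  have hkcases : γ.c k = CEntry.plus ∨ γ.c k = CEntry.minus := by
    cases hc : γ.c k with
    | plus => exact Or.inl rfl
    | minus => exact Or.inr rfl
    | num b => simp [CEntry.isNum, hc] at hk
  obtain ⟨h1, h2, h3, h4, h5, h6, h7⟩ := h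
  rcases lt_or_ge k u with hku | huk
  · rcases hkcases with hp | hm
    · exact h4 ⟨i, k, u, v, j, hik, hku, huvlt, hvj, hp, hij, huv, hne_u⟩
    · exact h5 ⟨i, k, u, v, j, hik, hku, huvlt, hvj, hm, hij, huv, hne_u⟩
  · have htk : t < k := htu.trans_le huk
    rcases hkcases with hp | hm
    · exact h6 ⟨i, s, t, k, j, his, hstlt, htk, hkj, hp, hij, hst, hne_s⟩
    · exact h7 ⟨i, s, t, k, j, his, hstlt, htk, hkj, hm, hij, hst, hne_s⟩
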